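/- The logarithmic potential of μ̄_p^α satisfies the strict inequalities: U_{μ̄_p^α}(z) < |z|²/(2α) + (log α - 1)/2 + c₁ for √p < |z| < 1, and U_{μ̄_p^α}(z) < |z|²/(2α) + (log α - 1)/2 for |z| > √α, where c₁ = (p(log p - 1) + 1)/(2α). -/

import Mathlib

open MeasureTheory Real

/-- The uniform probability measure on the unit circle in `ℂ`. -/
noncomputable def mT : Measure ℂ :=
  (ENNReal.ofReal (2 * π))⁻¹ •
    Measure.map (fun θ : ℝ => Complex.exp (θ * Complex.I))
      (volume.restrict (Set.Ioc 0 (2 * π)))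

/-- The closed annulus `{z : a ≤ |z| ≤ b}` in `ℂ`. -/
def annulus (a b : ℝ) : Set ℂ := {z | a ≤ ‖z‖ ∧ ‖z‖ ≤ b}

/-- The measure `μ̄_p^α = (1/α)[𝟙_{|z| ≤ √p} + 𝟙_{1 ≤ |z| ≤ √α}] dm/π + ((1-p)/α) m_T`. -/
noncomputable def muBar (α p : ℝ) : Measure ℂ :=
  ENNReal.ofReal (1 / (α * π)) •
      volume.restrict (Metric.closedBall (0 : ℂ) (Real.sqrt p) ∪ annulus 1 (Real.sqrt α))
    + ENNReal.ofReal ((1 - p) / α) • mT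

/-- The logarithmic potential of a measure on `ℂ`. -/
noncomputable def logPot (μ : Measure ℂ) (z : ℂ) : ℝ :=
  ∫ w, Real.log (‖z - w‖) ∂μ

/-!
In polar coordinates, everything reduces to the circle average of `w ↦ log ‖z - w‖` over
`‖w‖ = r`, which is `log (max r ‖z‖)` (Jensen's formula for `w ↦ z - w`). Integrating this
against `r dr` gives the potential in closed form off the support:
`U(z) = p log ‖z‖ / α + (log α - 1) / 2 + 1 / (2α)` for `√p < ‖z‖ < 1`, and `U(z) = log ‖z‖`
for `‖z‖ > √α`. Both strict inequalities are then `c (log x - log c) < x - c` for `x ≠ c`,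
i.e. `log t < t - 1` for `t ≠ 1`, applied with `x = ‖z‖²` and `c = p`, resp. `c = α`.
-/

theorem mul_log_sub_log_lt_sub {c x : ℝ} (hc : 0 < c) (hx : 0 < x) (hne : x ≠ c) :
    c * (log x - log c) < x - c := by
  have h := log_lt_sub_one_of_pos (div_pos hx hc) (by rwa [Ne, div_eq_one_iff_eq hc.ne'])
  rw [log_div hx.ne' hc.ne'] at h
  calc c * (log x - log c) < c * (x / c - 1) := mul_lt_mul_of_pos_left h hc
    _ = x - c := by field_simp

theorem integral_mul_log {a b : ℝ} (ha : 0 < a) (hb : 0 < b) :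
    ∫ r in a..b, r * log r = b ^ 2 / 2 * log b - b ^ 2 / 4 - (a ^ 2 / 2 * log a - a ^ 2 / 4) := by
  have hpos : ∀ r ∈ Set.uIcc a b, 0 < r := fun r hr =>
    lt_of_lt_of_le (lt_min ha hb) hr.1
  refine intervalIntegral.integral_eq_sub_of_hasDerivAt
    (f := fun r => r ^ 2 / 2 * log r - r ^ 2 / 4) (fun r hr => ?_)
    (ContinuousOn.intervalIntegrable ?_)
  · have hsq : HasDerivAt (fun x : ℝ => x ^ 2) (2 * r) r := by simpa using hasDerivAt_pow 2 r
    refine (((hsq.div_const 2).mul (hasDerivAt_log (hpos r hr).ne')).sub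
      (hsq.div_const 4)).congr_deriv ?_
    field_simp
    ring
  · exact continuousOn_id.mul (continuousOn_log.mono fun r hr => (hpos r hr).ne')

theorem circleAverage_log_norm_sub_eq_log_max {r : ℝ} (hr : 0 ≤ r) (z : ℂ) :
    circleAverage (fun w => log ‖z - w‖) 0 r = log (max r ‖z‖) := by
  rcases hr.eq_or_lt with rfl | hr
  · simp
  have hsymm : (fun w : ℂ => log ‖z - w‖) = (log ‖· - z‖) := by
    funext w; rw [norm_sub_rev]
  rw [hsymm, circleAverage_log_norm_sub_const_eq_log_radius_add_posLog hr.ne', zero_sub, norm_neg,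
    posLog_eq_log_max_one (by positivity), ← log_mul hr.ne' (by positivity),
    mul_max_of_nonneg _ _ hr.le, mul_one, mul_inv_cancel_left₀ hr.ne']

lemma isCompact_annulus (a b : ℝ) : IsCompact (annulus a b) :=
  (isCompact_closedBall (0 : ℂ) b).of_isClosed_subset
    ((isClosed_le continuous_const continuous_norm).inter
      (isClosed_le continuous_norm continuous_const))
    fun _ hw => by simpa using hw.2

lemma annulus_zero_eq_closedBall (s : ℝ) : annulus 0 s = Metric.closedBall 0 s := by
  ext w
  simp [annulus]

lemma Complex.polarCoord_symm_eq_circleMap (q : ℝ × ℝ) :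
    Complex.polarCoord.symm q = circleMap 0 q.1 q.2 := by
  rw [Complex.polarCoord_symm_apply, circleMap_zero, Complex.exp_mul_I, Complex.ofReal_cos,
    Complex.ofReal_sin]

lemma polarCoord_target_inter_ae_eq_Icc_prod_Icc {a b : ℝ} (ha : 0 ≤ a) :
    (polarCoord.target ∩ Set.Icc a b ×ˢ Set.univ : Set (ℝ × ℝ))
      =ᵐ[volume.prod volume] Set.Icc a b ×ˢ Set.Icc (-π) π := by
  have hinter : polarCoord.target ∩ Set.Icc a b ×ˢ Set.univ
      = (Set.Ioi 0 ∩ Set.Icc a b) ×ˢ Set.Ioo (-π) π := by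
    rw [polarCoord_target, Set.prod_inter_prod, Set.inter_univ]
  have hIcc : (Set.Ici 0 ∩ Set.Icc a b : Set ℝ) = Set.Icc a b :=
    Set.inter_eq_self_of_subset_right fun r hr => ha.trans hr.1
  rw [hinter]
  refine Measure.set_prod_ae_eq ?_ Ioo_ae_eq_Icc
  exact (Ioi_ae_eq_Ici.inter (Filter.EventuallyEq.refl _ _)).trans (.of_eq hIcc)

section PolarCoord

variable {E : Type*} [NormedAddCommGroup E] [NormedSpace ℝ E]

lemma indicator_annulus_comp_polarCoord_symm (f : ℂ → E) (a b : ℝ) :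
    Set.EqOn (fun q : ℝ × ℝ => q.1 • (annulus a b).indicator f (Complex.polarCoord.symm q))
      ((Set.Icc a b ×ˢ Set.univ).indicator fun q => q.1 • f (circleMap 0 q.1 q.2))
      polarCoord.target := by
  intro q hq
  have hq : 0 < q.1 := hq.1
  have hmem : circleMap 0 q.1 q.2 ∈ annulus a b ↔ q.1 ∈ Set.Icc a b := by
    simp [annulus, abs_of_pos hq]
  simp only [Complex.polarCoord_symm_eq_circleMap]
  by_cases h : q.1 ∈ Set.Icc a b
  · simp [h, hmem.mpr h]
  · simp [h, mt hmem.mp h]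

lemma integral_Icc_neg_pi_pi_circleMap (f : ℂ → E) (r : ℝ) :
    ∫ θ in Set.Icc (-π) π, f (circleMap 0 r θ) = (2 * π) • circleAverage f 0 r := by
  have hper : ∫ θ in -π..π, f (circleMap 0 r θ) = ∫ θ in 0..2 * π, f (circleMap 0 r θ) := by
    simpa [Function.comp_def, show -π + 2 * π = π by ring] using
      ((periodic_circleMap 0 r).comp f).intervalIntegral_add_eq (-π) 0
  rw [integral_Icc_eq_integral_Ioc, ← intervalIntegral.integral_of_le (by linarith [pi_pos]),
    hper, circleAverage_def, smul_inv_smul₀ two_pi_pos.ne']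

theorem setIntegral_annulus_eq_integral_circleAverage [CompleteSpace E] {f : ℂ → E} {a b : ℝ}
    (ha : 0 ≤ a) (hab : a ≤ b) (hf : ContinuousOn f (annulus a b)) :
    ∫ w in annulus a b, f w = (2 * π) • ∫ r in a..b, r • circleAverage f 0 r := by
  set g : ℝ × ℝ → E := fun q => q.1 • f (circleMap 0 q.1 q.2)
  have hg : IntegrableOn g (Set.Icc a b ×ˢ Set.Icc (-π) π) (volume.prod volume) := by
    refine ContinuousOn.integrableOn_compact (isCompact_Icc.prod isCompact_Icc) ?_
    refine continuousOn_fst.smul (hf.comp (by fun_prop) fun q hq => ?_)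
    simp [annulus, abs_of_nonneg (ha.trans hq.1.1), hq.1.1, hq.1.2]
  calc ∫ w in annulus a b, f w = ∫ w, (annulus a b).indicator f w :=
        (integral_indicator (isCompact_annulus a b).isClosed.measurableSet).symm
    _ = ∫ q in polarCoord.target, q.1 • (annulus a b).indicator f (Complex.polarCoord.symm q) :=
        (Complex.integral_comp_polarCoord_symm _).symm
    _ = ∫ q in polarCoord.target, (Set.Icc a b ×ˢ Set.univ).indicator g q :=
        setIntegral_congr_fun polarCoord.open_target.measurableSet
          (indicator_annulus_comp_polarCoord_symm f a b)
    _ = ∫ q in Set.Icc a b ×ˢ Set.Icc (-π) π, g q ∂(volume.prod volume) := by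
        rw [setIntegral_indicator (measurableSet_Icc.prod .univ), ← Measure.volume_eq_prod]
        exact setIntegral_congr_set (polarCoord_target_inter_ae_eq_Icc_prod_Icc ha)
    _ = ∫ r in Set.Icc a b, ∫ θ in Set.Icc (-π) π, g (r, θ) := setIntegral_prod g hg
    _ = (2 * π) • ∫ r in a..b, r • circleAverage f 0 r := by
        simp_rw [g, integral_smul, integral_Icc_neg_pi_pi_circleMap, smul_comm _ (2 * π),
          integral_smul, integral_Icc_eq_integral_Ioc, intervalIntegral.integral_of_le hab]

end PolarCoord

lemma continuousOn_log_norm_sub {z : ℂ} {s : Set ℂ} (hz : z ∉ s) :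
    ContinuousOn (fun w => log ‖z - w‖) s :=
  (continuous_const.sub continuous_id).norm.continuousOn.log fun _ hw =>
    norm_ne_zero_iff.mpr (sub_ne_zero.mpr (ne_of_mem_of_not_mem hw hz).symm)

theorem setIntegral_annulus_log_norm_sub {a b : ℝ} (ha : 0 ≤ a) (hab : a ≤ b) {z : ℂ}
    (hz : z ∉ annulus a b) :
    ∫ w in annulus a b, log ‖z - w‖ = 2 * π * ∫ r in a..b, r * log (max r ‖z‖) := by
  rw [setIntegral_annulus_eq_integral_circleAverage ha hab (continuousOn_log_norm_sub hz),
    smul_eq_mul]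
  congr 1
  refine intervalIntegral.integral_congr fun r hr => ?_
  rw [Set.uIcc_of_le hab] at hr
  simp only [smul_eq_mul, circleAverage_log_norm_sub_eq_log_max (ha.trans hr.1)]

theorem setIntegral_annulus_log_norm_sub_of_lt {a b : ℝ} (ha : 0 ≤ a) (hab : a ≤ b) {z : ℂ}
    (hz : b < ‖z‖) :
    ∫ w in annulus a b, log ‖z - w‖ = π * (b ^ 2 - a ^ 2) * log ‖z‖ := by
  rw [setIntegral_annulus_log_norm_sub ha hab fun h => hz.not_ge h.2,
    intervalIntegral.integral_congr (g := fun r => log ‖z‖ * r) fun r hr => by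
      rw [Set.uIcc_of_le hab] at hr
      rw [max_eq_right (hr.2.trans hz.le), mul_comm],
    intervalIntegral.integral_const_mul, integral_id]
  ring

theorem setIntegral_annulus_log_norm_sub_of_gt {a b : ℝ} (ha : 0 < a) (hab : a ≤ b) {z : ℂ}
    (hz : ‖z‖ < a) :
    ∫ w in annulus a b, log ‖z - w‖ =
      2 * π * (b ^ 2 / 2 * log b - b ^ 2 / 4 - (a ^ 2 / 2 * log a - a ^ 2 / 4)) := by
  rw [setIntegral_annulus_log_norm_sub ha.le hab fun h => hz.not_ge h.1,
    intervalIntegral.integral_congr (g := fun r => r * log r) fun r hr => by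
      rw [Set.uIcc_of_le hab] at hr
      rw [max_eq_left (hz.le.trans hr.1)],
    integral_mul_log ha (ha.trans_le hab)]

theorem integral_mT {f : ℂ → ℝ} (hf : Measurable f) : ∫ w, f w ∂mT = circleAverage f 0 1 := by
  rw [mT, integral_smul_measure, integral_map (by fun_prop) hf.aestronglyMeasurable,
    ← intervalIntegral.integral_of_le two_pi_pos.le, circleAverage_def,
    ENNReal.toReal_inv, ENNReal.toReal_ofReal two_pi_pos.le]
  simp [circleMap_zero]

theorem integrable_mT {f : ℂ → ℝ} (hf : Measurable f) (hcont : ContinuousOn f (Metric.sphere 0 1)) :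
    Integrable f mT := by
  refine Integrable.smul_measure ?_ (ENNReal.inv_ne_top.mpr (by positivity))
  rw [integrable_map_measure hf.aestronglyMeasurable (by fun_prop)]
  exact (hcont.comp_continuous (by fun_prop) (by simp)).integrableOn_Ioc

theorem logPot_muBar_eq {α p : ℝ} (hα : 0 ≤ α) (hp : p < 1) {z : ℂ} (hz1 : ‖z‖ ≠ 1)
    (hz : z ∉ annulus 0 (√p) ∪ annulus 1 (√α)) :
    logPot (muBar α p) z =
      1 / (α * π) * ((∫ w in annulus 0 (√p), log ‖z - w‖) + ∫ w in annulus 1 (√α), log ‖z - w‖)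
        + (1 - p) / α * log (max 1 ‖z‖) := by
  have hmeas : Measurable fun w : ℂ => log ‖z - w‖ := by fun_prop
  have hU : IntegrableOn (fun w => log ‖z - w‖) (annulus 0 (√p) ∪ annulus 1 (√α)) :=
    (continuousOn_log_norm_sub hz).integrableOn_compact
      ((isCompact_annulus _ _).union (isCompact_annulus _ _))
  have hT : Integrable (fun w => log ‖z - w‖) mT :=
    integrable_mT hmeas (continuousOn_log_norm_sub fun h => hz1 (by simpa using h))
  have hdisj : Disjoint (annulus 0 (√p)) (annulus 1 (√α)) :=
    Set.disjoint_left.mpr fun _ h0 h1 =>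
      (h0.2.trans_lt ((sqrt_lt' one_pos).mpr (by simpa using hp))).not_ge h1.1
  rw [logPot, muBar, ← annulus_zero_eq_closedBall,
    integral_add_measure (hU.smul_measure ENNReal.ofReal_ne_top)
      (hT.smul_measure ENNReal.ofReal_ne_top),
    integral_smul_measure, integral_smul_measure,
    ENNReal.toReal_ofReal (by positivity), ENNReal.toReal_ofReal (div_nonneg (by linarith) hα),
    setIntegral_union hdisj (isCompact_annulus _ _).isClosed.measurableSet
      (hU.mono_set Set.subset_union_left) (hU.mono_set Set.subset_union_right),
    integral_mT hmeas, circleAverage_log_norm_sub_eq_log_max zero_le_one, smul_eq_mul, smul_eq_mul]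

theorem logPot_muBar_of_sqrt_lt_of_lt_one {α p : ℝ} (hα : 1 ≤ α) (hp0 : 0 ≤ p) {z : ℂ}
    (h1 : √p < ‖z‖) (h2 : ‖z‖ < 1) :
    logPot (muBar α p) z = p * log ‖z‖ / α + (log α - 1) / 2 + 1 / (2 * α) := by
  have hp1 : p < 1 := by simpa using (lt_sq_of_sqrt_lt (h1.trans h2))
  have hz : z ∉ annulus 0 (√p) ∪ annulus 1 (√α) := by
    rintro (h | h)
    exacts [h1.not_ge h.2, h2.not_ge h.1]
  rw [logPot_muBar_eq (by linarith) hp1 h2.ne hz,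
    setIntegral_annulus_log_norm_sub_of_lt le_rfl (sqrt_nonneg p) h1,
    setIntegral_annulus_log_norm_sub_of_gt one_pos (one_le_sqrt.mpr hα) h2,
    max_eq_left h2.le, log_one, sq_sqrt hp0, sq_sqrt (by linarith), log_sqrt (by linarith)]
  field_simp
  ring

theorem logPot_muBar_of_sqrt_lt {α p : ℝ} (hα : 1 ≤ α) (hp0 : 0 ≤ p) (hp1 : p < 1) {z : ℂ}
    (h : √α < ‖z‖) :
    logPot (muBar α p) z = log ‖z‖ := by
  have hz1 : 1 < ‖z‖ := (one_le_sqrt.mpr hα).trans_lt h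
  have hpz : √p < ‖z‖ := ((sqrt_lt' one_pos).mpr (by simpa using hp1)).trans hz1
  have hz : z ∉ annulus 0 (√p) ∪ annulus 1 (√α) := by
    rintro (h' | h')
    exacts [hpz.not_ge h'.2, h.not_ge h'.2]
  rw [logPot_muBar_eq (by linarith) hp1 hz1.ne' hz,
    setIntegral_annulus_log_norm_sub_of_lt le_rfl (sqrt_nonneg p) hpz,
    setIntegral_annulus_log_norm_sub_of_lt zero_le_one (one_le_sqrt.mpr hα) h,
    max_eq_right hz1.le, sq_sqrt hp0, sq_sqrt (by linarith)]
  field_simp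
  ring

/-- Strict inequalities for the logarithmic potential of `μ̄_p^α` off its support:
`U(z) < |z|²/(2α) + (log α - 1)/2 + c₁` for `√p < |z| < 1`, and
`U(z) < |z|²/(2α) + (log α - 1)/2` for `|z| > √α`, where `c₁ = (p(log p - 1)+1)/(2α)`. -/
theorem logPot_muBar_strict (α p : ℝ) (hα : 1 ≤ α) (hp : p ∈ Set.Ioo (0 : ℝ) 1) :
    (∀ z : ℂ, Real.sqrt p < ‖z‖ → ‖z‖ < 1 →
      logPot (muBar α p) z < ‖z‖ ^ 2 / (2 * α) + (Real.log α - 1) / 2 +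
        (p * (Real.log p - 1) + 1) / (2 * α)) ∧
    (∀ z : ℂ, Real.sqrt α < ‖z‖ →
      logPot (muBar α p) z < ‖z‖ ^ 2 / (2 * α) + (Real.log α - 1) / 2) := by
  obtain ⟨hp0, hp1⟩ := hp
  have hα0 : 0 < α := one_pos.trans_le hα
  refine ⟨fun z h1 h2 => ?_, fun z h => ?_⟩
  · have key := mul_log_sub_log_lt_sub hp0 (pow_pos ((sqrt_nonneg p).trans_lt h1) 2)
      (lt_sq_of_sqrt_lt h1).ne'
    rw [logPot_muBar_of_sqrt_lt_of_lt_one hα hp0.le h1 h2]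
    refine sub_pos.mp ((div_pos (sub_pos.mpr key) (mul_pos two_pos hα0)).trans_eq ?_)
    rw [log_pow]
    field_simp
    ring
  · have key := mul_log_sub_log_lt_sub hα0 (pow_pos ((sqrt_nonneg α).trans_lt h) 2)
      (lt_sq_of_sqrt_lt h).ne'
    rw [logPot_muBar_of_sqrt_lt hα hp0.le hp1 h]
    refine sub_pos.mp ((div_pos (sub_pos.mpr key) (mul_pos two_pos hα0)).trans_eq ?_)
    rw [log_pow]
    field_simp
    ring
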